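/- arXiv:1007.5051 — 2 statements merged into one kernel-verified Lean document; each statement's English description precedes it below -/
import Mathlib

section
/- Let ν > 0, γ > 0, δ > 0, ω ∈ ℝ, and let s > 0 satisfy |ω| < s^ν. Then ∫₀^∞ e^{−st} t^{γ−1} E^δ_{ν,γ}(ω t^ν) dt = s^{νδ−γ} / (s^ν − ω)^δ, where E^δ_{ν,γ}(z) = ∑_{r=0}^∞ (Γ(δ+r)/Γ(δ)) · z^r / (r! Γ(νr + γ)); in particular the integrand is absolutely integrable on (0,∞). -/
/-!
Expand `E^δ_{ν,γ}(ω t^ν)` in its power series and integrate term by term. Since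
`∫₀^∞ e^{-st} t^{a-1} dt = Γ(a) / s^a`, the `r`-th term contributes
`s^{-γ} (δ)_r / r! · (ω / s^ν)^r`: the factor `Γ(νr + γ)` cancels, and what remains is
`s^{-γ}` times the binomial series of `(1 - ω / s^ν)^{-δ}`. The same computation with `|ω|` in
place of `ω` bounds the integrals of the absolute values of the terms, which justifies the
interchange of sum and integral and gives absolute integrability.
-/

open Set Filter Topology MeasureTheory Real

/-- The generalized (Prabhakar) Mittag-Leffler function
`E^δ_{ν,γ}(z) = ∑_{r=0}^∞ (Γ(δ+r)/Γ(δ)) z^r / (r! Γ(νr + γ))`. -/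
noncomputable def prabhakarML (ν γ δ z : ℝ) : ℝ :=
  ∑' r : ℕ, (Real.Gamma (δ + r) / Real.Gamma δ) * z ^ r /
    ((Nat.factorial r : ℝ) * Real.Gamma (ν * r + γ))

open scoped Nat ENNReal

theorem Real.Gamma_add_nat_eq_ascPochhammer_mul {δ : ℝ} (hδ : ∀ n : ℕ, δ + n ≠ 0) (n : ℕ) :
    Gamma (δ + n) = (ascPochhammer ℝ n).eval δ * Gamma δ := by
  induction n with
  | zero => simp
  | succ n ih =>
    rw [Nat.cast_succ, ← add_assoc, Gamma_add_one (hδ n), ih, ascPochhammer_succ_eval]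
    ring

theorem Ring.choose_add_nat_sub_one_eq_ascPochhammer {R : Type*} [Field R] [CharZero R]
    (a : R) (n : ℕ) :
    Ring.choose (a + n - 1) n = (ascPochhammer R n).eval a / n ! := by
  rw [Ring.choose_eq_smul, Polynomial.descPochhammer_smeval_eq_ascPochhammer,
    Polynomial.ascPochhammer_smeval_eq_eval, smul_eq_mul, div_eq_inv_mul]
  ring_nf

theorem Real.hasSum_one_sub_rpow_neg {δ x : ℝ} (hδ : 0 < δ) (hx : |x| < 1) :
    HasSum (fun n : ℕ ↦ Gamma (δ + n) / Gamma δ / n ! * x ^ n) ((1 - x) ^ (-δ)) := by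
  have hcoeff (n : ℕ) : Gamma (δ + n) / Gamma δ / n ! = Ring.choose (δ + n - 1) n := by
    rw [Ring.choose_add_nat_sub_one_eq_ascPochhammer,
      Gamma_add_nat_eq_ascPochhammer_mul (fun n ↦ by positivity),
      mul_div_cancel_right₀ _ (Gamma_pos_of_pos hδ).ne']
  have hball : x ∈ Metric.eball (0 : ℝ) 1 := by simpa [edist_dist] using hx
  have := (one_div_one_sub_rpow_hasFPowerSeriesOnBall_zero δ).hasSum hball
  simp only [FormalMultilinearSeries.ofScalars_apply_eq, zero_add, smul_eq_mul] at this
  simpa only [hcoeff, rpow_neg (by linarith [(abs_lt.1 hx).2] : 0 ≤ 1 - x), one_div] using this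

namespace MeasureTheory

variable {α E : Type*} [MeasurableSpace α] {μ : Measure α} [NormedAddCommGroup E]

theorem tsum_lintegral_enorm_ne_top_of_summable_integral_norm {F : ℕ → α → E}
    (hF_int : ∀ n, Integrable (F n) μ) (hF_sum : Summable fun n ↦ ∫ a, ‖F n a‖ ∂μ) :
    ∑' n, ∫⁻ a, ‖F n a‖ₑ ∂μ ≠ ∞ := by
  have (n : ℕ) : ∫⁻ a, ‖F n a‖ₑ ∂μ = ENNReal.ofReal (∫ a, ‖F n a‖ ∂μ) :=
    (ofReal_integral_norm_eq_lintegral_enorm (hF_int n)).symm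
  rw [funext this, ← ENNReal.ofReal_tsum_of_nonneg
    (fun n ↦ integral_nonneg fun _ ↦ norm_nonneg _) hF_sum]
  exact ENNReal.ofReal_ne_top

theorem integrable_tsum_of_summable_integral_norm [CompleteSpace E] {F : ℕ → α → E}
    (hF_int : ∀ n, Integrable (F n) μ) (hF_sum : Summable fun n ↦ ∫ a, ‖F n a‖ ∂μ) :
    Integrable (fun a ↦ ∑' n, F n a) μ := by
  have hmeas (n : ℕ) : AEMeasurable (fun a ↦ ‖F n a‖ₑ) μ := (hF_int n).1.enorm
  have hfin : ∫⁻ a, ∑' n, ‖F n a‖ₑ ∂μ ≠ ∞ := by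
    rw [lintegral_tsum hmeas]
    exact tsum_lintegral_enorm_ne_top_of_summable_integral_norm hF_int hF_sum
  have hsummable : ∀ᵐ a ∂μ, Summable fun n ↦ F n a := by
    filter_upwards [ae_lt_top' (AEMeasurable.tsum hmeas) hfin] with a ha
    exact Summable.of_norm (ENNReal.tsum_coe_ne_top_iff_summable_coe.1 ha.ne)
  refine ⟨aestronglyMeasurable_of_tendsto_ae atTop
    (f := fun N a ↦ ∑ n ∈ Finset.range N, F n a) (fun N ↦ ?_) ?_, ?_⟩
  · exact Finset.aestronglyMeasurable_fun_sum (Finset.range N) fun n _ ↦ (hF_int n).1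
  · filter_upwards [hsummable] with a ha
    exact ha.hasSum.tendsto_sum_nat
  · exact lt_of_le_of_lt (lintegral_mono fun a ↦ enorm_tsum_le_tsum_enorm) hfin.lt_top

end MeasureTheory

theorem integrableOn_rpow_mul_exp_neg_mul_Ioi {a s : ℝ} (ha : 0 < a) (hs : 0 < s) :
    IntegrableOn (fun t : ℝ ↦ t ^ (a - 1) * exp (-(s * t))) (Ioi 0) :=
  .of_integral_ne_zero (by rw [integral_rpow_mul_exp_neg_mul_Ioi ha hs]; positivity)

theorem integral_norm_const_mul_rpow_mul_exp_neg_mul_Ioi {a s : ℝ} (c : ℝ) (ha : 0 < a)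
    (hs : 0 < s) :
    ∫ t in Ioi (0 : ℝ), ‖c * (t ^ (a - 1) * exp (-(s * t)))‖ = |c| * ((1 / s) ^ a * Gamma a) := by
  rw [← integral_rpow_mul_exp_neg_mul_Ioi ha hs, ← integral_const_mul]
  refine setIntegral_congr_fun measurableSet_Ioi fun t (ht : 0 < t) ↦ ?_
  rw [norm_mul, Real.norm_eq_abs, Real.norm_of_nonneg (by positivity)]

section LaplaceSeries

variable {c a : ℕ → ℝ} {s : ℝ}

theorem integrableOn_tsum_rpow_mul_exp_neg_mul_Ioi (ha : ∀ n, 0 < a n) (hs : 0 < s)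
    (hc : Summable fun n ↦ |c n| * ((1 / s) ^ a n * Gamma (a n))) :
    IntegrableOn (fun t ↦ ∑' n, c n * (t ^ (a n - 1) * exp (-(s * t)))) (Ioi 0) :=
  integrable_tsum_of_summable_integral_norm
    (fun n ↦ (integrableOn_rpow_mul_exp_neg_mul_Ioi (ha n) hs).const_mul (c n))
    (by simpa only [integral_norm_const_mul_rpow_mul_exp_neg_mul_Ioi _ (ha _) hs] using hc)

theorem hasSum_integral_tsum_rpow_mul_exp_neg_mul_Ioi (ha : ∀ n, 0 < a n) (hs : 0 < s)
    (hc : Summable fun n ↦ |c n| * ((1 / s) ^ a n * Gamma (a n))) :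
    HasSum (fun n ↦ c n * ((1 / s) ^ a n * Gamma (a n)))
      (∫ t in Ioi 0, ∑' n, c n * (t ^ (a n - 1) * exp (-(s * t)))) := by
  simpa only [integral_const_mul, integral_rpow_mul_exp_neg_mul_Ioi (ha _) hs] using
    hasSum_integral_of_summable_integral_norm
      (fun n ↦ (integrableOn_rpow_mul_exp_neg_mul_Ioi (ha n) hs).const_mul (c n))
      (by simpa only [integral_norm_const_mul_rpow_mul_exp_neg_mul_Ioi _ (ha _) hs] using hc)

end LaplaceSeries

section Prabhakar

variable {ν γ δ : ℝ}

noncomputable def prabhakarCoeff (ν γ δ : ℝ) (r : ℕ) : ℝ :=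
  Gamma (δ + r) / Gamma δ / (r ! * Gamma (ν * r + γ))

theorem prabhakarML_eq_tsum (z : ℝ) :
    prabhakarML ν γ δ z = ∑' r, prabhakarCoeff ν γ δ r * z ^ r :=
  tsum_congr fun r ↦ by rw [prabhakarCoeff]; ring

theorem prabhakarCoeff_nonneg (hν : 0 ≤ ν) (hγ : 0 < γ) (hδ : 0 < δ) (r : ℕ) :
    0 ≤ prabhakarCoeff ν γ δ r := by
  have : 0 < Gamma (ν * r + γ) := Gamma_pos_of_pos (by positivity)
  have : 0 < Gamma (δ + r) := Gamma_pos_of_pos (by positivity)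
  have : 0 < Gamma δ := Gamma_pos_of_pos hδ
  unfold prabhakarCoeff
  positivity

theorem exp_mul_rpow_mul_prabhakarML_eq_tsum {s t : ℝ} (ω : ℝ) (ht : 0 < t) :
    exp (-(s * t)) * t ^ (γ - 1) * prabhakarML ν γ δ (ω * t ^ ν) =
      ∑' r : ℕ, prabhakarCoeff ν γ δ r * ω ^ r * (t ^ (ν * r + γ - 1) * exp (-(s * t))) := by
  rw [prabhakarML_eq_tsum, ← tsum_mul_left]
  refine tsum_congr fun r ↦ ?_
  rw [mul_pow, ← rpow_natCast (t ^ ν), ← rpow_mul ht.le, add_sub_assoc, rpow_add ht]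
  ring

theorem prabhakarCoeff_mul_pow_mul_laplace {s : ℝ} (ω : ℝ) (hs : 0 < s) {r : ℕ}
    (hr : 0 < ν * r + γ) :
    prabhakarCoeff ν γ δ r * ω ^ r * ((1 / s) ^ (ν * r + γ) * Gamma (ν * r + γ)) =
      (1 / s) ^ γ * (Gamma (δ + r) / Gamma δ / r ! * (ω / s ^ ν) ^ r) := by
  have : Gamma (ν * r + γ) ≠ 0 := (Gamma_pos_of_pos hr).ne'
  rw [prabhakarCoeff, rpow_add (by positivity), rpow_mul (by positivity), rpow_natCast,
    div_rpow zero_le_one hs.le, one_rpow]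
  generalize Gamma (ν * r + γ) = G at this ⊢
  field_simp
  ring

end Prabhakar

theorem one_div_rpow_mul_one_sub_div_rpow_neg {ν γ δ ω s : ℝ} (hs : 0 < s) (hω : ω < s ^ ν) :
    (1 / s) ^ γ * (1 - ω / s ^ ν) ^ (-δ) = s ^ (ν * δ - γ) / (s ^ ν - ω) ^ δ := by
  have hsν : 0 < s ^ ν := rpow_pos_of_pos hs ν
  rw [one_sub_div hsν.ne', rpow_neg (div_nonneg (sub_pos.2 hω).le hsν.le),
    div_rpow (sub_pos.2 hω).le hsν.le, ← rpow_mul hs.le, rpow_sub hs,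
    div_rpow zero_le_one hs.le, one_rpow]
  field_simp

/-- Prabhakar's Laplace transform formula: for `ν, γ, δ > 0`, `s > 0` with
`|ω| < s^ν`, `∫₀^∞ e^{−st} t^{γ−1} E^δ_{ν,γ}(ω t^ν) dt = s^{νδ−γ}/(s^ν − ω)^δ`, the
integrand being absolutely integrable on `(0,∞)`. -/
theorem stmt11 (ν γ δ ω s : ℝ) (hν : 0 < ν) (hγ : 0 < γ) (hδ : 0 < δ)
    (hs : 0 < s) (hω : |ω| < s ^ ν) :
    MeasureTheory.IntegrableOn
      (fun t : ℝ => Real.exp (-(s * t)) * t ^ (γ - 1) * prabhakarML ν γ δ (ω * t ^ ν))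
      (Set.Ioi 0) ∧
    ∫ t in Set.Ioi (0:ℝ), Real.exp (-(s * t)) * t ^ (γ - 1) * prabhakarML ν γ δ (ω * t ^ ν) =
      s ^ (ν * δ - γ) / (s ^ ν - ω) ^ δ := by
  have hr (r : ℕ) : 0 < ν * r + γ := by positivity
  have hq (x : ℝ) (hx : |x| < s ^ ν) : |x / s ^ ν| < 1 := by
    rwa [abs_div, abs_of_pos (rpow_pos_of_pos hs ν), div_lt_one (rpow_pos_of_pos hs ν)]
  have hsummable : Summable fun r : ℕ ↦
      |prabhakarCoeff ν γ δ r * ω ^ r| * ((1 / s) ^ (ν * r + γ) * Gamma (ν * r + γ)) := by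
    simp only [abs_mul, abs_pow, abs_of_nonneg (prabhakarCoeff_nonneg hν.le hγ hδ _),
      prabhakarCoeff_mul_pow_mul_laplace |ω| hs (hr _)]
    exact ((hasSum_one_sub_rpow_neg hδ (hq |ω| (by rwa [abs_abs]))).summable).mul_left _
  have hseries : EqOn
      (fun t : ℝ ↦ exp (-(s * t)) * t ^ (γ - 1) * prabhakarML ν γ δ (ω * t ^ ν))
      (fun t ↦ ∑' r : ℕ, prabhakarCoeff ν γ δ r * ω ^ r *
        (t ^ (ν * r + γ - 1) * exp (-(s * t)))) (Ioi 0) :=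
    fun t ht ↦ exp_mul_rpow_mul_prabhakarML_eq_tsum ω ht
  refine ⟨(integrableOn_tsum_rpow_mul_exp_neg_mul_Ioi hr hs hsummable).congr_fun hseries.symm
    measurableSet_Ioi, ?_⟩
  rw [setIntegral_congr_fun measurableSet_Ioi hseries,
    ← (hasSum_integral_tsum_rpow_mul_exp_neg_mul_Ioi hr hs hsummable).tsum_eq]
  simp only [prabhakarCoeff_mul_pow_mul_laplace ω hs (hr _)]
  rw [tsum_mul_left, (hasSum_one_sub_rpow_neg hδ (hq ω hω)).tsum_eq,
    one_div_rpow_mul_one_sub_div_rpow_neg hs (lt_of_abs_lt hω)]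
end

section
/- Let 0 < β < 1, λ > 0, n ∈ ℕ, and let s > 0 satisfy λ < s^β. Define p(n,t) = ((λ t^β)^n / n!) · ∑_{r=0}^∞ ((n+r)!/r!) · (−λ t^β)^r / Γ(β(r+n) + 1) for t > 0. Then ∫₀^∞ e^{−st} p(n,t) dt = (s^{β−1}/(λ + s^β)) · (λ^n/(λ + s^β)^n). -/
/-!
Expanding `p(n,t)` in powers of `t^β` and integrating term by term against `e^{-st}`, each
`t^{β(r+n)}` contributes `Γ(β(r+n)+1) / s^{β(r+n)+1}`, which cancels the Gamma factor of the
series. What remains is `λ^n s^{-βn-1} ∑_r C(r+n,n) (-λ/s^β)^r`, a negative binomial series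
summing to `λ^n s^{-βn-1} (1 + λ/s^β)^{-(n+1)}`. Since `λ < s^β` it converges absolutely, which
is what justifies exchanging sum and integral.
-/

open Set Filter Topology MeasureTheory Real

theorem integrableOn_rpow_mul_exp_neg_mul {μ s : ℝ} (hμ : -1 < μ) (hs : 0 < s) :
    IntegrableOn (fun t : ℝ => t ^ μ * exp (-(s * t))) (Ioi 0) := by
  simpa only [rpow_one, neg_mul] using integrableOn_rpow_mul_exp_neg_mul_rpow hμ one_pos hs

theorem integral_rpow_mul_exp_neg_mul_Ioi_eq_Gamma_div {μ s : ℝ} (hμ : -1 < μ) (hs : 0 < s) :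
    ∫ t in Ioi 0, t ^ μ * exp (-(s * t)) = Gamma (μ + 1) / s ^ (μ + 1) := by
  have h := integral_rpow_mul_exp_neg_mul_Ioi (neg_lt_iff_pos_add.mp hμ) hs
  rwa [add_sub_cancel_right, div_rpow zero_le_one hs.le, one_rpow, one_div_mul_eq_div] at h

theorem integral_exp_neg_mul_mul_tsum_rpow {s : ℝ} {b μ : ℕ → ℝ} (hs : 0 < s)
    (hμ : ∀ r, -1 < μ r) (hsum : Summable fun r => b r * (Gamma (μ r + 1) / s ^ (μ r + 1))) :
    ∫ t in Ioi 0, exp (-(s * t)) * ∑' r, b r * t ^ μ r =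
      ∑' r, b r * (Gamma (μ r + 1) / s ^ (μ r + 1)) := by
  set F : ℕ → ℝ → ℝ := fun r t => b r * (t ^ μ r * exp (-(s * t)))
  have hF_int : ∀ r, Integrable (F r) (volume.restrict (Ioi 0)) := fun r =>
    (integrableOn_rpow_mul_exp_neg_mul (hμ r) hs).const_mul _
  have hF_integral : ∀ r, ∫ t in Ioi 0, F r t = b r * (Gamma (μ r + 1) / s ^ (μ r + 1)) :=
    fun r => by rw [integral_const_mul, integral_rpow_mul_exp_neg_mul_Ioi_eq_Gamma_div (hμ r) hs]
  have hF_norm : ∀ r, ∫ t in Ioi 0, ‖F r t‖ = ‖b r * (Gamma (μ r + 1) / s ^ (μ r + 1))‖ := by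
    intro r
    have hΓ : 0 < Gamma (μ r + 1) / s ^ (μ r + 1) :=
      div_pos (Gamma_pos_of_pos (by linarith [hμ r])) (rpow_pos_of_pos hs _)
    rw [norm_mul, norm_of_nonneg hΓ.le, ← integral_rpow_mul_exp_neg_mul_Ioi_eq_Gamma_div (hμ r) hs,
      ← integral_const_mul]
    refine setIntegral_congr_fun measurableSet_Ioi fun t (ht : 0 < t) => ?_
    rw [norm_mul, norm_of_nonneg (by positivity : 0 ≤ t ^ μ r * exp (-(s * t)))]
  calc ∫ t in Ioi 0, exp (-(s * t)) * ∑' r, b r * t ^ μ r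
      = ∫ t in Ioi 0, ∑' r, F r t := by
        congr 1 with t
        rw [← tsum_mul_left]
        exact tsum_congr fun r => by ring
    _ = ∑' r, ∫ t in Ioi 0, F r t :=
        -- summability in `ℝ` is automatically absolute
        (integral_tsum_of_summable_integral_norm hF_int
          (by simpa only [hF_norm] using summable_norm_iff.mpr hsum)).symm
    _ = _ := tsum_congr hF_integral

open Nat in
noncomputable def fracPoissonCoeff (β lam : ℝ) (n r : ℕ) : ℝ :=
  lam ^ n / n ! * ((n + r)! / r ! * (-lam) ^ r) / Gamma (β * (r + n) + 1)

theorem cast_factorial_add_div_factorial (n r : ℕ) :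
    ((n + r).factorial / r.factorial : ℝ) = (r + n).choose n * n.factorial := by
  rw [div_eq_iff (by positivity), add_comm n r, ← Nat.add_choose_mul_factorial_mul_factorial r n]
  push_cast
  ring

theorem fracPoisson_series_eq (β lam : ℝ) (n : ℕ) {t : ℝ} (ht : 0 ≤ t) :
    (lam * t ^ β) ^ n / n.factorial *
        ∑' r : ℕ, ((n + r).factorial / r.factorial : ℝ) * (-(lam * t ^ β)) ^ r /
          Gamma (β * (r + n) + 1) =
      ∑' r : ℕ, fracPoissonCoeff β lam n r * t ^ (β * (r + n)) := by
  rw [← tsum_mul_left]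
  refine tsum_congr fun r => ?_
  rw [fracPoissonCoeff, rpow_mul ht, ← Nat.cast_add, rpow_natCast, pow_add]
  ring

theorem fracPoissonCoeff_mul_gamma_div {β s : ℝ} (hβ : 0 ≤ β) (hs : 0 < s) (lam : ℝ) (n r : ℕ) :
    fracPoissonCoeff β lam n r * (Gamma (β * (r + n) + 1) / s ^ (β * (r + n) + 1)) =
      lam ^ n / s ^ (β * n + 1) * ((r + n).choose n * (-(lam / s ^ β)) ^ r) := by
  have hΓ : Gamma (β * (r + n) + 1) ≠ 0 := (Gamma_pos_of_pos (by positivity)).ne'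
  have hpow : s ^ (β * (r + n) + 1) = (s ^ β) ^ r * s ^ (β * n + 1) := by
    rw [← rpow_natCast, ← rpow_mul hs.le, ← rpow_add hs]
    ring_nf
  have hsβ : 0 < s ^ β := rpow_pos_of_pos hs β
  rw [fracPoissonCoeff, cast_factorial_add_div_factorial, hpow, ← neg_div, div_pow]
  field_simp

theorem stmt12_general (β lam s : ℝ) (n : ℕ) (hβ0 : 0 < β) (hlam : 0 < lam)
    (hs : 0 < s) (hls : lam < s ^ β)
    (p : ℕ → ℝ → ℝ)
    (hp : ∀ t : ℝ, 0 < t → p n t =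
      ((lam * t ^ β) ^ n / (Nat.factorial n : ℝ)) *
        ∑' r : ℕ, ((Nat.factorial (n + r) : ℝ) / (Nat.factorial r : ℝ)) *
          (-(lam * t ^ β)) ^ r / Real.Gamma (β * (r + n) + 1)) :
    ∫ t in Set.Ioi (0:ℝ), Real.exp (-(s * t)) * p n t =
      (s ^ (β - 1) / (lam + s ^ β)) * (lam ^ n / (lam + s ^ β) ^ n) := by
  have hsβ : 0 < s ^ β := rpow_pos_of_pos hs β
  have hx : ‖-(lam / s ^ β)‖ < 1 := by
    rw [norm_neg, norm_of_nonneg (by positivity)]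
    exact (div_lt_one hsβ).2 hls
  have hterm := fracPoissonCoeff_mul_gamma_div hβ0.le hs lam n
  calc ∫ t in Ioi 0, exp (-(s * t)) * p n t
      = ∫ t in Ioi 0, exp (-(s * t)) * ∑' r : ℕ, fracPoissonCoeff β lam n r * t ^ (β * (r + n)) :=
        setIntegral_congr_fun measurableSet_Ioi fun t (ht : 0 < t) => by
          rw [hp t ht, fracPoisson_series_eq β lam n ht.le]
    _ = ∑' r : ℕ, lam ^ n / s ^ (β * n + 1) * ((r + n).choose n * (-(lam / s ^ β)) ^ r) := by
        refine (integral_exp_neg_mul_mul_tsum_rpow hs (fun r => ?_) ?_).trans (tsum_congr hterm)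
        · exact neg_one_lt_zero.trans_le (by positivity)
        · simpa only [hterm] using (summable_choose_mul_geometric_of_norm_lt_one n hx).mul_left _
    _ = lam ^ n / s ^ (β * n + 1) * (1 / (1 + lam / s ^ β) ^ (n + 1)) := by
        rw [tsum_mul_left, tsum_choose_mul_geometric_of_norm_lt_one n hx, sub_neg_eq_add]
    _ = s ^ (β - 1) / (lam + s ^ β) * (lam ^ n / (lam + s ^ β) ^ n) := by
        rw [rpow_add hs, rpow_one, rpow_mul hs.le, rpow_natCast, rpow_sub_one hs.ne',
          one_add_div hsβ.ne', div_pow, pow_succ]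
        field_simp
        ring

/-- the Laplace transform of the fractional Poisson probability mass function
`p(n,t) = ((λ t^β)^n/n!) ∑_{r=0}^∞ ((n+r)!/r!) (−λ t^β)^r / Γ(β(r+n)+1)` is
`(s^{β−1}/(λ+s^β)) ⬝ (λ^n/(λ+s^β)^n)` for `s > 0` with `λ < s^β`. -/
theorem stmt12 (β lam s : ℝ) (n : ℕ) (hβ0 : 0 < β) (hβ1 : β < 1) (hlam : 0 < lam)
    (hs : 0 < s) (hls : lam < s ^ β)
    (p : ℕ → ℝ → ℝ)
    (hp : ∀ t : ℝ, 0 < t → p n t =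
      ((lam * t ^ β) ^ n / (Nat.factorial n : ℝ)) *
        ∑' r : ℕ, ((Nat.factorial (n + r) : ℝ) / (Nat.factorial r : ℝ)) *
          (-(lam * t ^ β)) ^ r / Real.Gamma (β * (r + n) + 1)) :
    ∫ t in Set.Ioi (0:ℝ), Real.exp (-(s * t)) * p n t =
      (s ^ (β - 1) / (lam + s ^ β)) * (lam ^ n / (lam + s ^ β) ^ n) :=
  stmt12_general β lam s n hβ0 hlam hs hls p hp
end
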